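/- Let f, g ∈ ℂ[[u]][v] be Weierstrass polynomials. Then the intersection multiplicity i₀(f, g) = dim_ℂ(ℂ[[u]][v]/(f, g)) is finite if and only if f and g have no common non-unit divisor in ℂ[[u]][v]. -/

import Mathlib

open Polynomial

/-- The Sylvester matrix of `f` and `g`, regarded as polynomials of degree `m` and `n`
respectively (rows `0,…,n-1` carry the coefficients of `f`, rows `n,…,n+m-1` those of `g`). -/
noncomputable def sylvester {R : Type*} [CommRing R] (f g : Polynomial R) (m n : ℕ) :
    Matrix (Fin (n + m)) (Fin (n + m)) R :=
  Matrix.of fun i j =>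
    if (i : ℕ) < n then
      (if (i : ℕ) ≤ (j : ℕ) ∧ (j : ℕ) ≤ (i : ℕ) + m then f.coeff (m + i - j) else 0)
    else
      (if (i : ℕ) - n ≤ (j : ℕ) ∧ (j : ℕ) ≤ (i : ℕ) then g.coeff ((i : ℕ) - (j : ℕ)) else 0)

/-- The resultant of `f` and `g`, regarded as polynomials of degree `m` and `n`:
the determinant of the Sylvester matrix. -/
noncomputable def resultant {R : Type*} [CommRing R] (f g : Polynomial R) (m n : ℕ) : R :=
  (_root_.sylvester f g m n).det

/-- A Weierstrass polynomial: a monic polynomial in `v` over `ℂ[[u]]` all of whose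
non-leading coefficients vanish at `u = 0`. -/
def IsWeierstrass (f : Polynomial (PowerSeries ℂ)) : Prop :=
  f.Monic ∧ ∀ i < f.natDegree, PowerSeries.constantCoeff (R := ℂ) (f.coeff i) = 0

/-- The partial derivative `∂f/∂u`: the formal derivative of power series applied to
each coefficient of `f`. -/
noncomputable def pderivU (f : Polynomial (PowerSeries ℂ)) : Polynomial (PowerSeries ℂ) :=
  f.sum fun i c => Polynomial.C (PowerSeries.derivative ℂ c) * Polynomial.X ^ i

/-- The intersection multiplicity `i₀(f,g) = dim_ℂ ℂ[[u]][v]/(f,g)` (as `finrank`,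
which is `0` when the dimension is infinite). -/
noncomputable def interMult (f g : Polynomial (PowerSeries ℂ)) : ℕ :=
  Module.finrank ℂ (Polynomial (PowerSeries ℂ) ⧸ Ideal.span {f, g})

/-- The Milnor number `μ₀(f) = dim_ℂ ℂ[[u]][v]/(∂f/∂u, ∂f/∂v)` (as `finrank`,
which is `0` when the dimension is infinite). -/
noncomputable def milnor (f : Polynomial (PowerSeries ℂ)) : ℕ :=
  Module.finrank ℂ (Polynomial (PowerSeries ℂ) ⧸ Ideal.span {pderivU f, derivative f})

/-!
If `d` is a common non-unit divisor, then `K⟦u⟧` embeds into `K⟦u⟧[v]/(d)`, because a divisor of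
a monic polynomial that also divides a nonzero constant is a unit; so the quotient is infinite
dimensional. Conversely, by Gauss's lemma `f` and `g` stay coprime over `Frac K⟦u⟧`, and clearing
denominators in a Bézout relation puts a power `u^k` into `(f, g)`. Then `K⟦u⟧[v]/(f, g)` is a
finite `K⟦u⟧`-module (as `f` is monic) killed by `u^k`, hence a finite module over the finite
dimensional algebra `K⟦u⟧/(u^k)`.
-/

theorem Ideal.Quotient.finite_of_le {R A : Type*} [CommSemiring R] [CommRing A] [Algebra R A]
    {I J : Ideal A} (h : I ≤ J) [Module.Finite R (A ⧸ I)] : Module.Finite R (A ⧸ J) :=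
  .of_surjective (Ideal.Quotient.factorₐ R h).toLinearMap (Ideal.Quotient.factor_surjective h)

namespace PowerSeries

theorem not_finite (K : Type*) [Field K] : ¬Module.Finite K (PowerSeries K) :=
  fun _ => Polynomial.not_finite (R := K) <|
    .of_injective (Polynomial.coeToPowerSeries.algHom K).toLinearMap (Polynomial.coe_injective K)

theorem finite_quotient_span_X_pow (K : Type*) [Field K] (k : ℕ) :
    Module.Finite K (PowerSeries K ⧸ Ideal.span {(X : PowerSeries K) ^ k}) := by
  refine .of_surjective ((Ideal.Quotient.mkₐ K _).toLinearMap ∘ₗ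
    (Polynomial.coeToPowerSeries.algHom K).toLinearMap ∘ₗ (degreeLT K k).subtype) ?_
  intro q
  obtain ⟨r, rfl⟩ := Ideal.Quotient.mk_surjective q
  refine ⟨⟨trunc k r, mem_degreeLT.mpr (degree_trunc_lt r k)⟩, ?_⟩
  refine Ideal.Quotient.eq.mpr
    (Ideal.mem_span_singleton'.mpr ⟨-PowerSeries.mk fun i => coeff (i + k) r, ?_⟩)
  conv_rhs => rw [eq_X_pow_mul_shift_add_trunc k r]
  simp [mul_comm]

theorem finite_of_isTorsionBy_X_pow {K M : Type*} [Field K] [AddCommGroup M]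
    [Module (PowerSeries K) M] [Module K M] [IsScalarTower K (PowerSeries K) M]
    [Module.Finite (PowerSeries K) M] {k : ℕ}
    (hM : Module.IsTorsionBy (PowerSeries K) M (X ^ k)) : Module.Finite K M := by
  let := hM.module
  have := finite_quotient_span_X_pow K k
  have : Module.Finite (PowerSeries K ⧸ Ideal.span {(X : PowerSeries K) ^ k}) M :=
    .of_restrictScalars_finite (PowerSeries K) _ _
  exact .trans (PowerSeries K ⧸ Ideal.span {(X : PowerSeries K) ^ k}) M

end PowerSeries

namespace Polynomial

theorem isUnit_of_dvd_C_of_dvd_monic {R : Type*} [CommRing R] [IsDomain R] {d f : R[X]}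
    (hf : f.Monic) (hdf : d ∣ f) {r : R} (hr : r ≠ 0) (hdr : d ∣ C r) : IsUnit d := by
  have hd : d.natDegree = 0 := by
    simpa using natDegree_le_of_dvd hdr (C_ne_zero.mpr hr)
  rw [eq_C_of_natDegree_eq_zero hd] at hdf ⊢
  refine isUnit_C.mpr (isUnit_of_dvd_one ?_)
  simpa [hf.coeff_natDegree] using (C_dvd_iff_dvd_coeff _ _).mp hdf f.natDegree

theorem not_finite_quotient_span_of_dvd_monic {K R : Type*} [Field K] [CommRing R] [IsDomain R]
    [Algebra K R] (hR : ¬Module.Finite K R) {d f : R[X]} (hf : f.Monic) (hdf : d ∣ f)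
    (hd : ¬IsUnit d) : ¬Module.Finite K (R[X] ⧸ Ideal.span {d}) := by
  intro hfin
  refine hR (.of_injective ((Ideal.Quotient.mkₐ K (Ideal.span {d})).comp
    (IsScalarTower.toAlgHom K R R[X])).toLinearMap ?_)
  refine (injective_iff_map_eq_zero _).mpr fun r hr => ?_
  by_contra hr0
  refine hd (isUnit_of_dvd_C_of_dvd_monic hf hdf hr0 ?_)
  simpa [Ideal.Quotient.eq_zero_iff_mem, Ideal.mem_span_singleton] using hr

theorem isRelPrime_map_of_monic {R K : Type*} [CommRing R] [IsDomain R] [IsIntegrallyClosed R]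
    [Field K] [Algebra R K] [IsFractionRing R K] {f g : R[X]} (hf : f.Monic)
    (h : IsRelPrime f g) : IsRelPrime (f.map (algebraMap R K)) (g.map (algebraMap R K)) := by
  intro d hdf hdg
  have hd0 : d ≠ 0 := ne_zero_of_dvd_ne_zero (hf.map _).ne_zero hdf
  obtain ⟨e, hed⟩ := IsIntegrallyClosed.eq_map_mul_C_of_dvd K hf hdf
  have he : e.Monic := by
    refine monic_of_injective (IsFractionRing.injective R K) ?_
    have := congrArg leadingCoeff hed
    rw [leadingCoeff_mul, leadingCoeff_C] at this
    exact (mul_eq_right₀ (leadingCoeff_ne_zero.mpr hd0)).mp this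
  have hdvd : ∀ p : R[X], d ∣ p.map (algebraMap R K) → e ∣ p := fun p hp =>
    (map_dvd_map _ (IsFractionRing.injective R K) he).mp ((dvd_mul_right _ _).trans (hed ▸ hp))
  rw [← hed]
  exact ((h (hdvd f hdf) (hdvd g hdg)).map (mapRingHom _)).mul
    (isUnit_C.mpr (leadingCoeff_ne_zero.mpr hd0).isUnit)

attribute [local instance] Polynomial.algebra Polynomial.isLocalization in
theorem exists_C_mem_of_isCoprime_map {R K : Type*} [CommRing R] [IsDomain R]
    [Field K] [Algebra R K] [IsFractionRing R K] {f g : R[X]}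
    (h : IsCoprime (f.map (algebraMap R K)) (g.map (algebraMap R K))) :
    ∃ c ≠ 0, C c ∈ Ideal.span {f, g} := by
  have htop : (Ideal.span {f, g}).map (algebraMap R[X] K[X]) = ⊤ := by
    rw [Ideal.map_span, Set.image_pair, algebraMap_def, coe_mapRingHom, Ideal.eq_top_iff_one,
      Ideal.mem_span_pair]
    exact h
  -- `K[X]` is the localization of `R[X]` at the nonzero constants.
  obtain ⟨_, ⟨c, hc, rfl⟩, hcI⟩ := Set.not_disjoint_iff.mp fun hdisj =>
    (IsLocalization.map_algebraMap_ne_top_iff_disjoint ((nonZeroDivisors R).map C) K[X] _).mpr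
      hdisj htop
  exact ⟨c, nonZeroDivisors.ne_zero hc, hcI⟩

theorem finite_quotient_of_monic_mem_of_C_mem {K : Type*} [Field K]
    {I : Ideal (PowerSeries K)[X]} {f : (PowerSeries K)[X]} (hf : f.Monic) (hfI : f ∈ I)
    {c : PowerSeries K} (hc : c ≠ 0) (hcI : C c ∈ I) :
    Module.Finite K ((PowerSeries K)[X] ⧸ I) := by
  obtain ⟨k, u, rfl⟩ :=
    IsDiscreteValuationRing.eq_unit_mul_pow_irreducible hc PowerSeries.X_irreducible
  have hXk : C (PowerSeries.X ^ k) ∈ I := by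
    simpa [← mul_assoc] using I.mul_mem_left (C ↑u⁻¹) hcI
  have := hf.finite_quotient
  have := Ideal.Quotient.finite_of_le (R := PowerSeries K)
    (Ideal.span_le.mpr (Set.singleton_subset_iff.mpr hfI))
  refine PowerSeries.finite_of_isTorsionBy_X_pow (k := k) fun q => ?_
  obtain ⟨p, rfl⟩ := Ideal.Quotient.mk_surjective q
  rw [← Ideal.Quotient.mkₐ_eq_mk (PowerSeries K), ← map_smul, Ideal.Quotient.mkₐ_eq_mk,
    Ideal.Quotient.eq_zero_iff_mem, smul_eq_C_mul]
  exact I.mul_mem_right p hXk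

end Polynomial

theorem stmt15_general (f g : Polynomial (PowerSeries ℂ))
    (hWf : IsWeierstrass f) :
    Module.Finite ℂ (Polynomial (PowerSeries ℂ) ⧸ Ideal.span {f, g}) ↔ IsRelPrime f g := by
  constructor
  · intro hfin d hdf hdg
    by_contra hd
    have hle : Ideal.span {f, g} ≤ Ideal.span {d} := by
      rw [Ideal.span_le, Set.insert_subset_iff, Set.singleton_subset_iff]
      exact ⟨Ideal.mem_span_singleton.mpr hdf, Ideal.mem_span_singleton.mpr hdg⟩
    exact not_finite_quotient_span_of_dvd_monic (PowerSeries.not_finite ℂ) hWf.1 hdf hd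
      (Ideal.Quotient.finite_of_le hle)
  · intro h
    obtain ⟨c, hc, hcI⟩ := exists_C_mem_of_isCoprime_map (K := FractionRing (PowerSeries ℂ))
      (isRelPrime_map_of_monic hWf.1 h).isCoprime
    exact finite_quotient_of_monic_mem_of_C_mem hWf.1 (Ideal.subset_span (Set.mem_insert f _))
      hc hcI

theorem stmt15 (f g : Polynomial (PowerSeries ℂ))
    (hWf : IsWeierstrass f) (hWg : IsWeierstrass g) :
    Module.Finite ℂ (Polynomial (PowerSeries ℂ) ⧸ Ideal.span {f, g}) ↔ IsRelPrime f g :=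
  stmt15_general f g hWf
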